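/- In a priced game, if a strategy profile σ = (σ₁, σ₂) has no improving switches for either player, then σ₁ and σ₂ are both optimal strategies. -/

import Mathlib

noncomputable section

open Classical
open scoped ENNReal

namespace PTGpaper

/-- A priced game: finitely many states partitioned between Player 1 (owner `0`,
the minimizer) and Player 2 (owner `1`, the maximizer), actions with nonnegative
(extended real) costs and destinations in the states or the terminal state
(modeled by `none`). -/
structure PricedGame where
  n : ℕ
  owner : Fin n → Fin 2
  A : Fin n → Finset ℕ
  cost : ℕ → ℝ≥0∞
  dest : ℕ → Option (Fin n)

namespace PricedGame

variable (G : PricedGame)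

/-- A positional strategy profile: a choice of an available action in each state. -/
def Valid (σ : Fin G.n → ℕ) : Prop :=
  ∀ k, σ k ∈ G.A k

def step (σ : Fin G.n → ℕ) (o : Option (Fin G.n)) : Option (Fin G.n) :=
  o.bind fun k => G.dest (σ k)

/-- The state reached after `t` steps of the path `P_{k,σ}` (`none` = terminal). -/
def reach (σ : Fin G.n → ℕ) (k : Fin G.n) (t : ℕ) : Option (Fin G.n) :=
  (G.step σ)^[t] (some k)

/-- The path from `k` under `σ` reaches the terminal state `⊥`. -/
def Terminates (σ : Fin G.n → ℕ) (k : Fin G.n) : Prop :=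
  ∃ t, G.reach σ k t = none

/-- Payoff `u(k,σ)`: total cost of the path from `k` to `⊥`, or `∞` if `⊥` is unreached. -/
def payoff (σ : Fin G.n → ℕ) (k : Fin G.n) : ℝ≥0∞ :=
  if G.Terminates σ k then
    ∑' t : ℕ, (G.reach σ k t).elim 0 (fun k' => G.cost (σ k'))
  else ⊤

/-- Length `ℓ(k,σ)` of the path from `k` to `⊥` (`⊤` if `⊥` is unreached). -/
def len (σ : Fin G.n → ℕ) (k : Fin G.n) : ℕ∞ :=
  ⨅ (t : ℕ) (_ : G.reach σ k t = none), (t : ℕ∞)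

def payoffO (σ : Fin G.n → ℕ) (o : Option (Fin G.n)) : ℝ≥0∞ :=
  o.elim 0 (G.payoff σ)

def lenO (σ : Fin G.n → ℕ) (o : Option (Fin G.n)) : ℕ∞ :=
  o.elim 0 (G.len σ)

/-- The valuation `ν(k,σ) = (u(k,σ), ℓ(k,σ))`, ordered lexicographically. -/
def valn (σ : Fin G.n → ℕ) (k : Fin G.n) : ℝ≥0∞ ×ₗ ℕ∞ :=
  toLex (G.payoff σ k, G.len σ k)

/-- The valuation obtained by first using action `j` and then following `σ`. -/
def cand (σ : Fin G.n → ℕ) (j : ℕ) : ℝ≥0∞ ×ₗ ℕ∞ :=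
  toLex (G.cost j + G.payoffO σ (G.dest j), 1 + G.lenO σ (G.dest j))

/-- `j ∈ A k` is an improving switch for Player 1 (the minimizer) at `k` w.r.t. `σ`. -/
def Improving1 (σ : Fin G.n → ℕ) (k : Fin G.n) (j : ℕ) : Prop :=
  j ∈ G.A k ∧ G.cand σ j < G.valn σ k

/-- `j ∈ A k` is an improving switch for Player 2 (the maximizer) at `k` w.r.t. `σ`. -/
def Improving2 (σ : Fin G.n → ℕ) (k : Fin G.n) (j : ℕ) : Prop :=
  j ∈ G.A k ∧ G.valn σ k < G.cand σ j

/-- Strongly improving switch for Player 1: strictly smaller payoff. -/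
def StronglyImproving1 (σ : Fin G.n → ℕ) (k : Fin G.n) (j : ℕ) : Prop :=
  j ∈ G.A k ∧ G.cost j + G.payoffO σ (G.dest j) < G.payoff σ k

/-- Strongly improving switch for Player 2: strictly larger payoff. -/
def StronglyImproving2 (σ : Fin G.n → ℕ) (k : Fin G.n) (j : ℕ) : Prop :=
  j ∈ G.A k ∧ G.payoff σ k < G.cost j + G.payoffO σ (G.dest j)

/-- Combine a Player 1 strategy and a Player 2 strategy into a profile. -/
def combine (σ₁ σ₂ : Fin G.n → ℕ) (k : Fin G.n) : ℕ :=
  if G.owner k = 0 then σ₁ k else σ₂ k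

/-- The upper value `min_{σ₁} max_{σ₂} u(k,σ₁,σ₂)`. -/
def upperVal (k : Fin G.n) : ℝ≥0∞ :=
  ⨅ σ₁ : {σ : Fin G.n → ℕ // G.Valid σ}, ⨆ σ₂ : {σ : Fin G.n → ℕ // G.Valid σ},
    G.payoff (G.combine σ₁ σ₂) k

/-- The lower value `max_{σ₂} min_{σ₁} u(k,σ₁,σ₂)`. -/
def lowerVal (k : Fin G.n) : ℝ≥0∞ :=
  ⨆ σ₂ : {σ : Fin G.n → ℕ // G.Valid σ}, ⨅ σ₁ : {σ : Fin G.n → ℕ // G.Valid σ},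
    G.payoff (G.combine σ₁ σ₂) k

/-- `σ₁` is a best response of Player 1 to `σ₂`: it minimizes the payoff at every state. -/
def BestResponse1 (σ₁ σ₂ : Fin G.n → ℕ) : Prop :=
  G.Valid σ₁ ∧ ∀ σ₁' : Fin G.n → ℕ, G.Valid σ₁' →
    ∀ k, G.payoff (G.combine σ₁ σ₂) k ≤ G.payoff (G.combine σ₁' σ₂) k

/-- `σ₂` is a best response of Player 2 to `σ₁`: it maximizes the payoff at every state. -/
def BestResponse2 (σ₁ σ₂ : Fin G.n → ℕ) : Prop :=
  G.Valid σ₂ ∧ ∀ σ₂' : Fin G.n → ℕ, G.Valid σ₂' →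
    ∀ k, G.payoff (G.combine σ₁ σ₂') k ≤ G.payoff (G.combine σ₁ σ₂) k

/-- `σ₁` is an optimal Player 1 strategy: it attains the upper value at every state. -/
def Optimal1 (σ₁ : Fin G.n → ℕ) : Prop :=
  G.Valid σ₁ ∧ ∀ k,
    (⨆ σ₂ : {σ : Fin G.n → ℕ // G.Valid σ}, G.payoff (G.combine σ₁ σ₂) k) = G.upperVal k

/-- `σ₂` is an optimal Player 2 strategy: it attains the lower value at every state. -/
def Optimal2 (σ₂ : Fin G.n → ℕ) : Prop :=
  G.Valid σ₂ ∧ ∀ k,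
    (⨅ σ₁ : {σ : Fin G.n → ℕ // G.Valid σ}, G.payoff (G.combine σ₁ σ₂) k) = G.lowerVal k

/-- `σ[B]`: switch `σ` to the actions prescribed by the partial assignment `β`
(at most one action per state). -/
def switch (σ : Fin G.n → ℕ) (β : Fin G.n → Option ℕ) (k : Fin G.n) : ℕ :=
  (β k).getD (σ k)

/-- `β` represents an improving set `B` for Player 1: it contains at least one
improving switch for Player 1 and no improving switch for Player 2. -/
def ImprovingSet1 (σ : Fin G.n → ℕ) (β : Fin G.n → Option ℕ) : Prop :=
  (∀ k j, β k = some j → j ∈ G.A k) ∧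
  (∃ k j, β k = some j ∧ G.Improving1 σ k j) ∧
  (∀ k j, β k = some j → ¬ G.Improving2 σ k j)

/-- `β` represents an improving set `B` for Player 2. -/
def ImprovingSet2 (σ : Fin G.n → ℕ) (β : Fin G.n → Option ℕ) : Prop :=
  (∀ k j, β k = some j → j ∈ G.A k) ∧
  (∃ k j, β k = some j ∧ G.Improving2 σ k j) ∧
  (∀ k j, β k = some j → ¬ G.Improving1 σ k j)

end PricedGame

end PTGpaper

/-! Fix `σ` with no improving switch and let Player 2 deviate to `τ`. At every state the action
`τ` plays is then lexicographically no better than `σ`'s: `cand σ (τ m) ≤ valn σ m`.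
Along a terminating `τ`-path the first components telescope to `u(k, τ) ≤ u(k, σ)`. A
`τ`-path from a state with finite `u(·, σ)` cannot be infinite: along it `valn σ` strictly
decreases (the length component takes care of zero-cost steps), which is impossible on
finitely many states. Symmetrically for Player 1, so `(σ, σ)` is a saddle point of the payoff,
and a saddle point consists of optimal strategies. -/

theorem iSup_eq_iInf_iSup_of_isSaddle {α ι κ : Type*} [CompleteLattice α] {f : ι → κ → α}
    {i₀ : ι} {j₀ : κ} (hj : ∀ j, f i₀ j ≤ f i₀ j₀) (hi : ∀ i, f i₀ j₀ ≤ f i j₀) :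
    ⨆ j, f i₀ j = ⨅ i, ⨆ j, f i j :=
  le_antisymm (le_iInf fun i => (iSup_le hj).trans ((hi i).trans (le_iSup (f i) j₀)))
    (iInf_le _ i₀)

theorem iInf_eq_iSup_iInf_of_isSaddle {α ι κ : Type*} [CompleteLattice α] {f : ι → κ → α}
    {i₀ : ι} {j₀ : κ} (hj : ∀ j, f i₀ j ≤ f i₀ j₀) (hi : ∀ i, f i₀ j₀ ≤ f i j₀) :
    ⨅ i, f i j₀ = ⨆ j, ⨅ i, f i j :=
  le_antisymm (le_iSup (fun j => ⨅ i, f i j) j₀)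
    (iSup_le fun j => iInf_le_of_le i₀ ((hj j).trans (le_iInf hi)))

namespace PTGpaper

namespace PricedGame

variable (G : PricedGame)

section Bellman

variable (σ : Fin G.n → ℕ)

lemma iterate_step_none (t : ℕ) : (G.step σ)^[t] none = none :=
  Function.iterate_fixed rfl t

lemma reach_succ (k : Fin G.n) (t : ℕ) :
    G.reach σ k (t + 1) = (G.step σ)^[t] (G.dest (σ k)) :=
  Function.iterate_succ_apply _ t _

lemma terminates_iff (k : Fin G.n) :
    G.Terminates σ k ↔ ∃ t, (G.step σ)^[t] (G.dest (σ k)) = none := by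
  constructor
  · rintro ⟨_ | t, ht⟩
    · cases ht
    · exact ⟨t, by rwa [reach_succ] at ht⟩
  · rintro ⟨t, ht⟩
    exact ⟨t + 1, by rwa [reach_succ]⟩

lemma payoffO_eq_ite (o : Option (Fin G.n)) :
    G.payoffO σ o = if ∃ t, (G.step σ)^[t] o = none then
      ∑' t, ((G.step σ)^[t] o).elim 0 (fun k => G.cost (σ k)) else ⊤ := by
  cases o with
  | none => simp [payoffO, iterate_step_none]
  | some k => rfl

lemma lenO_eq_iInf (o : Option (Fin G.n)) :
    G.lenO σ o = ⨅ (t : ℕ) (_ : (G.step σ)^[t] o = none), (t : ℕ∞) := by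
  cases o with
  | none =>
    simp only [lenO, iterate_step_none, iInf_pos, Option.elim_none]
    exact (nonpos_iff_eq_zero.1 (iInf_le _ 0)).symm
  | some k => rfl

lemma payoff_eq_cost_add (k : Fin G.n) :
    G.payoff σ k = G.cost (σ k) + G.payoffO σ (G.dest (σ k)) := by
  rw [payoff, payoffO_eq_ite, ← terminates_iff]
  split_ifs
  · rw [tsum_eq_zero_add' ENNReal.summable]
    simp only [reach_succ]
    rfl
  · rw [add_top]

lemma len_eq_one_add (k : Fin G.n) : G.len σ k = 1 + G.lenO σ (G.dest (σ k)) := by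
  rw [lenO_eq_iInf, ENat.add_iInf₂, len, ← inf_iInf_nat_succ]
  simp only [reach_succ]
  simp [reach, add_comm]

lemma cand_self (k : Fin G.n) : G.cand σ (σ k) = G.valn σ k := by
  rw [cand, valn, ← payoff_eq_cost_add, ← len_eq_one_add]

end Bellman

section Comparison

variable {σ τ : Fin G.n → ℕ}

@[elab_as_elim]
lemma terminates_induction {P : Fin G.n → Prop}
    (step : ∀ k, (∀ k', G.dest (τ k) = some k' → P k') → P k) {k : Fin G.n}
    (hk : G.Terminates τ k) : P k := by
  obtain ⟨t, ht⟩ := hk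
  induction t generalizing k with
  | zero => cases ht
  | succ t ih => exact step k fun k' hd => ih (by rwa [reach_succ, hd] at ht)

lemma terminates_of_payoff_ne_top {k : Fin G.n} (h : G.payoff σ k ≠ ⊤) : G.Terminates σ k := by
  by_contra hk
  exact h (if_neg hk)

lemma len_ne_top {k : Fin G.n} (h : G.Terminates σ k) : G.len σ k ≠ ⊤ := by
  obtain ⟨t, ht⟩ := h
  exact ((iInf₂_le t ht).trans_lt (ENat.natCast_lt_top t)).ne

lemma payoff_le_of_cost_add_le
    (H : ∀ m, G.cost (τ m) + G.payoffO σ (G.dest (τ m)) ≤ G.payoff σ m) {k : Fin G.n}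
    (hk : G.Terminates τ k) : G.payoff τ k ≤ G.payoff σ k := by
  refine G.terminates_induction (fun k ih => ?_) hk
  rw [payoff_eq_cost_add _ τ]
  refine (add_le_add le_rfl ?_).trans (H k)
  cases hd : G.dest (τ k) with
  | none => exact le_rfl
  | some k' => exact ih k' hd

lemma payoff_le_of_le_cost_add
    (H : ∀ m, G.payoff σ m ≤ G.cost (τ m) + G.payoffO σ (G.dest (τ m))) (k : Fin G.n) :
    G.payoff σ k ≤ G.payoff τ k := by
  by_cases hk : G.Terminates τ k
  · refine G.terminates_induction (fun k ih => ?_) hk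
    rw [payoff_eq_cost_add _ τ]
    refine (H k).trans (add_le_add le_rfl ?_)
    cases hd : G.dest (τ k) with
    | none => exact le_rfl
    | some k' => exact ih k' hd
  · rw [show G.payoff τ k = ⊤ from if_neg hk]
    exact le_top

lemma valn_lt_of_cand_le {j : ℕ} {m m' : Fin G.n} (h : G.cand σ j ≤ G.valn σ m)
    (hd : G.dest j = some m') (hm : G.payoff σ m ≠ ⊤) : G.valn σ m' < G.valn σ m := by
  rw [cand, hd] at h
  obtain ⟨hp, hl⟩ := Prod.Lex.toLex_le_toLex'.1 h
  change G.cost j + G.payoff σ m' ≤ G.payoff σ m at hp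
  change _ = _ → 1 + G.len σ m' ≤ G.len σ m at hl
  refine Prod.Lex.toLex_lt_toLex'.2 ⟨le_add_self.trans hp, fun heq => ?_⟩
  change G.payoff σ m' = G.payoff σ m at heq
  have hlen : 1 + G.len σ m' ≤ G.len σ m := hl (hp.antisymm (by rw [← heq]; exact le_add_self))
  rw [add_comm] at hlen
  exact (ENat.add_one_le_iff' (G.len_ne_top (G.terminates_of_payoff_ne_top hm))).1 hlen

lemma terminates_of_cand_le (H : ∀ m, G.cand σ (τ m) ≤ G.valn σ m) {k : Fin G.n}
    (hk : G.payoff σ k ≠ ⊤) : G.Terminates τ k := by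
  have wf : WellFounded fun m' m => G.valn σ m' < G.valn σ m :=
    Finite.wellFounded_of_trans_of_irrefl _
  induction k using wf.induction with
  | h k ih =>
    rw [terminates_iff]
    cases hd : G.dest (τ k) with
    | none => exact ⟨0, rfl⟩
    | some k' =>
      have hlt := G.valn_lt_of_cand_le (H k) hd hk
      exact ih k' hlt (ne_top_of_le_ne_top hk (Prod.Lex.monotone_fst _ _ hlt.le))

lemma payoff_le_of_cand_le (H : ∀ m, G.cand σ (τ m) ≤ G.valn σ m) (k : Fin G.n) :
    G.payoff τ k ≤ G.payoff σ k := by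
  by_cases hk : G.payoff σ k = ⊤
  · exact hk ▸ le_top
  · exact G.payoff_le_of_cost_add_le (fun m => (Prod.Lex.toLex_le_toLex'.1 (H m)).1)
      (G.terminates_of_cand_le H hk)

end Comparison

section Strategies

lemma combine_self (σ : Fin G.n → ℕ) : G.combine σ σ = σ :=
  funext fun k => by rw [combine]; split <;> rfl

variable {σ : Fin G.n → ℕ}

lemma cand_combine_le_valn (h2 : ∀ k j, G.owner k = 1 → ¬ G.Improving2 σ k j)
    {τ : Fin G.n → ℕ} (hτ : G.Valid τ) (m : Fin G.n) :
    G.cand σ (G.combine σ τ m) ≤ G.valn σ m := by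
  rw [combine]
  split_ifs with hm
  · exact (G.cand_self σ m).le
  · exact not_lt.1 fun hlt => h2 m (τ m) (by omega) ⟨hτ m, hlt⟩

lemma valn_le_cand_combine (h1 : ∀ k j, G.owner k = 0 → ¬ G.Improving1 σ k j)
    {τ : Fin G.n → ℕ} (hτ : G.Valid τ) (m : Fin G.n) :
    G.valn σ m ≤ G.cand σ (G.combine τ σ m) := by
  rw [combine]
  split_ifs with hm
  · exact not_lt.1 fun hlt => h1 m (τ m) hm ⟨hτ m, hlt⟩
  · exact (G.cand_self σ m).ge

lemma bestResponse1_self (hσ : G.Valid σ) (h1 : ∀ k j, G.owner k = 0 → ¬ G.Improving1 σ k j) :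
    G.BestResponse1 σ σ := by
  refine ⟨hσ, fun τ hτ k => ?_⟩
  rw [combine_self]
  exact G.payoff_le_of_le_cost_add
    (fun m => (Prod.Lex.toLex_le_toLex'.1 (G.valn_le_cand_combine h1 hτ m)).1) k

lemma bestResponse2_self (hσ : G.Valid σ) (h2 : ∀ k j, G.owner k = 1 → ¬ G.Improving2 σ k j) :
    G.BestResponse2 σ σ := by
  refine ⟨hσ, fun τ hτ k => ?_⟩
  rw [combine_self]
  exact G.payoff_le_of_cand_le (G.cand_combine_le_valn h2 hτ) k

variable {σ₁ σ₂ : Fin G.n → ℕ}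

lemma optimal1_of_bestResponse (h1 : G.BestResponse1 σ₁ σ₂) (h2 : G.BestResponse2 σ₁ σ₂) :
    G.Optimal1 σ₁ :=
  ⟨h1.1, fun k => iSup_eq_iInf_iSup_of_isSaddle
    (f := fun τ₁ τ₂ : {σ // G.Valid σ} => G.payoff (G.combine τ₁ τ₂) k)
    (i₀ := ⟨σ₁, h1.1⟩) (j₀ := ⟨σ₂, h2.1⟩) (fun τ₂ => h2.2 τ₂ τ₂.2 k) (fun τ₁ => h1.2 τ₁ τ₁.2 k)⟩

lemma optimal2_of_bestResponse (h1 : G.BestResponse1 σ₁ σ₂) (h2 : G.BestResponse2 σ₁ σ₂) :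
    G.Optimal2 σ₂ :=
  ⟨h2.1, fun k => iInf_eq_iSup_iInf_of_isSaddle
    (f := fun τ₁ τ₂ : {σ // G.Valid σ} => G.payoff (G.combine τ₁ τ₂) k)
    (i₀ := ⟨σ₁, h1.1⟩) (j₀ := ⟨σ₂, h2.1⟩) (fun τ₂ => h2.2 τ₂ τ₂.2 k) (fun τ₁ => h1.2 τ₁ τ₁.2 k)⟩

end Strategies

end PricedGame

/-- if neither player has an improving switch with respect to the
strategy profile `σ`, then `σ` is an optimal strategy for both players. -/
theorem no_improving_switch_implies_optimal (G : PricedGame) (σ : Fin G.n → ℕ)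
    (hσ : G.Valid σ)
    (h1 : ∀ k j, G.owner k = 0 → ¬ G.Improving1 σ k j)
    (h2 : ∀ k j, G.owner k = 1 → ¬ G.Improving2 σ k j) :
    G.Optimal1 σ ∧ G.Optimal2 σ := by
  have hbr1 := G.bestResponse1_self hσ h1
  have hbr2 := G.bestResponse2_self hσ h2
  exact ⟨G.optimal1_of_bestResponse hbr1 hbr2, G.optimal2_of_bestResponse hbr1 hbr2⟩

end PTGpaper
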